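/- (Proposition 1, threshold recursion in the initial off-peak period) Let t be a time in the initial off-peak period T_off,1 and let τ_t ∈ [0, (T−t−1)·v̄] satisfy −π_off⁺ ∈ h_{t+1}(τ_t). Then −π_off⁺ ∈ h_t(τ_t + v̄); i.e., the procrastination thresholds obey the backward recursion τ_{t−1} = τ_t + v̄ in the initial off-peak period. -/

import Mathlib

open MeasureTheory Set

/-- NEM X payment for net consumption `z` with buy price `pp` and sell price `pm`. -/
noncomputable def NEMPayment (pp pm z : ℝ) : ℝ := pp * max z 0 - pm * max (-z) 0

/-- The superdifferential of a function `f : ℝ → ℝ` (viewed as a concave function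
on `[0, ∞)`) at a point `y`. -/
def superdiff (f : ℝ → ℝ) (y : ℝ) : Set ℝ :=
  {s | ∀ z, 0 ≤ z → f z ≤ f y + s * (z - y)}

/-- Data of the EV-charging / flexible-consumption dynamic program over horizon
`{0, …, T-1}` with `K` flexible loads, under NEM time-of-use prices. -/
structure EVModel (K T : ℕ) (Ω : Type) [MeasurableSpace Ω] where
  /-- underlying probability measure -/
  μ : Measure Ω
  prob : IsProbabilityMeasure μ
  /-- consumption upper bounds -/
  dbar : Fin K → ℝ
  dbar_pos : ∀ i, 0 < dbar i
  /-- device utility functions -/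
  U : Fin K → ℝ → ℝ
  U_strictConcave : ∀ i, StrictConcaveOn ℝ (Icc 0 (dbar i)) (U i)
  U_strictMono : ∀ i, StrictMonoOn (U i) (Icc 0 (dbar i))
  U_diff : ∀ i, ∀ x ∈ Icc 0 (dbar i), DifferentiableWithinAt ℝ (U i) (Icc 0 (dbar i)) x
  U_contDeriv : ∀ i, ContinuousOn (fun x => derivWithin (U i) (Icc 0 (dbar i)) x) (Icc 0 (dbar i))
  U_zero : ∀ i, U i 0 = 0
  /-- renewable processes -/
  r : ℕ → Ω → ℝ
  r_meas : ∀ t, Measurable (r t)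
  r_nonneg : ∀ t ω, 0 ≤ r t ω
  r_int : ∀ t, Integrable (r t) μ
  r_indep : ProbabilityTheory.iIndepFun r μ
  /-- time-of-use buy prices `π_t⁺` -/
  pip : ℕ → ℝ
  /-- time-of-use sell prices `π_t⁻` -/
  pim : ℕ → ℝ
  /-- maximal per-period EV charge -/
  vbar : ℝ
  vbar_pos : 0 < vbar
  /-- per-unit penalty for unmet EV demand at the horizon -/
  γ : ℝ
  /-- `π_off⁻ = min_t π_t⁻` -/
  pioff : ℝ
  pioff_le : ∀ t < T, pioff ≤ pim t
  pioff_attained : ∃ t < T, pioff = pim t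
  /-- assumption A1 -/
  A1 : ∀ t < T, 0 < pim t ∧ pim t ≤ pip t ∧ pip t < γ

namespace EVModel

variable {K T : ℕ} {Ω : Type} [MeasurableSpace Ω]

/-- Stage reward `g_t(x_t, v, d)`. -/
noncomputable def stage (M : EVModel K T Ω) (t : ℕ) (rt v : ℝ) (d : Fin K → ℝ) : ℝ :=
  ∑ i, M.U i (d i) - NEMPayment (M.pip t) (M.pim t) (v + ∑ i, d i - rt)

/-- Feasible decisions `(v, d)` given remaining demand `y`. -/
def feas (M : EVModel K T Ω) (y : ℝ) : Set (ℝ × (Fin K → ℝ)) :=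
  {p | p.1 ∈ Icc 0 (min M.vbar y) ∧ ∀ i, p.2 i ∈ Icc 0 (M.dbar i)}

/-- Value function indexed by `k = T - 1 - t`, the number of remaining periods after
the current one. -/
noncomputable def W (M : EVModel K T Ω) : ℕ → ℝ → ℝ → ℝ
  | 0 => fun y rt => sSup ((fun p : ℝ × (Fin K → ℝ) =>
      M.stage (T - 1) rt p.1 p.2 - M.γ * (y - p.1)) '' M.feas y)
  | (k + 1) => fun y rt => sSup ((fun p : ℝ × (Fin K → ℝ) =>
      M.stage (T - 2 - k) rt p.1 p.2 +
        ∫ ω, M.W k (y - p.1) (M.r (T - 1 - k) ω) ∂M.μ) '' M.feas y)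

/-- Value function `V_t(y, r_t)` (the price argument is determined by `t`). -/
noncomputable def V (M : EVModel K T Ω) (t : ℕ) (y rt : ℝ) : ℝ := M.W (T - 1 - t) y rt

/-- Expected value function `V̄_t(y) = E[V_t(y, r_t, π_t)]`. -/
noncomputable def Vbar (M : EVModel K T Ω) (t : ℕ) (y : ℝ) : ℝ := ∫ ω, M.V t y (M.r t ω) ∂M.μ

/-- Objective of the Bellman equation at time `t` in state `(y, rt)`. -/
noncomputable def bellObj (M : EVModel K T Ω) (t : ℕ) (y rt : ℝ) (p : ℝ × (Fin K → ℝ)) : ℝ :=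
  if t = T - 1 then M.stage t rt p.1 p.2 - M.γ * (y - p.1)
  else M.stage t rt p.1 p.2 + ∫ ω, M.V (t + 1) (y - p.1) (M.r (t + 1) ω) ∂M.μ

/-- `(v, d)` is an optimal solution of the Bellman equation at time `t`. -/
def IsBellmanOpt (M : EVModel K T Ω) (t : ℕ) (y rt : ℝ) (p : ℝ × (Fin K → ℝ)) : Prop :=
  p ∈ M.feas y ∧ ∀ q ∈ M.feas y, M.bellObj t y rt q ≤ M.bellObj t y rt p

/-- Superdifferential `h_t` of the concave expected value function `V̄_t`. -/
noncomputable def h (M : EVModel K T Ω) (t : ℕ) (y : ℝ) : Set ℝ := superdiff (M.Vbar t) y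

end EVModel

/-!
Compare any decision `(v, d)` at remaining demand `z` with `(v̄, d)` at demand `τ + v̄`.
Charging the extra `v̄ - v` costs at most `π_t⁺ (v̄ - v)` in NEM payment, because the payment
is convex with slopes `π_t⁻ ≤ π_t⁺`; the continuation value, having supergradient `-π_t⁺` at `τ`,
gains at most `-π_t⁺ (z - v - τ)`. Hence `V_t(·, r)` has supergradient `-π_t⁺` at `τ + v̄` for
every `r`, and integrating over `r_t` gives the claim, `V_t(y, ·)` being monotone and bounded
by an affine function of `r_t`. In the initial off-peak period `π_t⁺ = π_off⁺`.
-/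

theorem mul_le_NEMPayment {pp pm : ℝ} (h : pm ≤ pp) (z : ℝ) : pm * z ≤ NEMPayment pp pm z := by
  unfold NEMPayment
  rcases le_total z 0 with hz | hz
  · simp [max_eq_right hz, max_eq_left (neg_nonneg.2 hz)]
  · simp only [max_eq_left hz, max_eq_right (neg_nonpos.2 hz)]
    nlinarith

theorem NEMPayment_monotone {pp pm : ℝ} (h0 : 0 ≤ pm) (h : pm ≤ pp) :
    Monotone (NEMPayment pp pm) := by
  intro z z' hzz'
  unfold NEMPayment
  have := max_le_max_right 0 hzz'
  have := max_le_max_right 0 (neg_le_neg hzz')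
  nlinarith

theorem NEMPayment_sub_le {pp pm : ℝ} (h : pm ≤ pp) {z z' : ℝ} (hzz' : z ≤ z') :
    NEMPayment pp pm z' - NEMPayment pp pm z ≤ pp * (z' - z) := by
  unfold NEMPayment
  have := mul_nonneg (sub_nonneg.2 h) (sub_nonneg.2 (max_le_max_right 0 (neg_le_neg hzz')))
  have := congrArg (pp * ·) (max_zero_sub_eq_self z)
  have := congrArg (pp * ·) (max_zero_sub_eq_self z')
  linarith

theorem le_of_mem_superdiff {f : ℝ → ℝ} {s y : ℝ} (hs : s ∈ superdiff f y) (hs0 : s ≤ 0)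
    {z : ℝ} (hz : 0 ≤ z) : f z ≤ f y - s * y := by
  have := hs z hz
  nlinarith

theorem mem_superdiff_integral {Ω : Type} [MeasurableSpace Ω] {μ : Measure Ω}
    [IsProbabilityMeasure μ] {f : ℝ → Ω → ℝ} {s y : ℝ} (hy : 0 ≤ y)
    (hf : ∀ z, 0 ≤ z → Integrable (f z) μ)
    (hle : ∀ z, 0 ≤ z → ∀ ω, f z ω ≤ f y ω + s * (z - y)) :
    s ∈ superdiff (fun z => ∫ ω, f z ω ∂μ) y := by
  intro z hz
  calc ∫ ω, f z ω ∂μ ≤ ∫ ω, (f y ω + s * (z - y)) ∂μ :=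
        integral_mono (hf z hz) ((hf y hy).add (integrable_const _)) (hle z hz)
    _ = ∫ ω, f y ω ∂μ + s * (z - y) := by
        rw [integral_add (hf y hy) (integrable_const _), integral_const]
        simp

namespace EVModel

variable {K T : ℕ} {Ω : Type} [MeasurableSpace Ω] (M : EVModel K T Ω)

noncomputable def bellman (t : ℕ) (F : ℝ → ℝ) (y rt : ℝ) : ℝ :=
  sSup ((fun p : ℝ × (Fin K → ℝ) => M.stage t rt p.1 p.2 + F (y - p.1)) '' M.feas y)

theorem V_eq_bellman {t : ℕ} (ht : t < T - 1) (y rt : ℝ) :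
    M.V t y rt = M.bellman t (M.Vbar (t + 1)) y rt := by
  obtain ⟨k, hk⟩ : ∃ k, T - 1 - t = k + 1 := ⟨T - 2 - t, by omega⟩
  have hstage : T - 2 - k = t := by omega
  have hnext : T - 1 - k = t + 1 := by omega
  have hk' : T - 1 - (t + 1) = k := by omega
  simp only [V, Vbar, bellman, hk, W, hstage, hnext, hk']

theorem zero_mem_feas {y : ℝ} (hy : 0 ≤ y) : ((0, 0) : ℝ × (Fin K → ℝ)) ∈ M.feas y :=
  ⟨⟨le_rfl, le_min M.vbar_pos.le hy⟩, fun i => ⟨le_rfl, (M.dbar_pos i).le⟩⟩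

variable {t : ℕ}

theorem pim_nonneg (ht : t < T) : 0 ≤ M.pim t := (M.A1 t ht).1.le

theorem pip_nonneg (ht : t < T) : 0 ≤ M.pip t := (M.pim_nonneg ht).trans (M.A1 t ht).2.1

theorem stage_le (ht : t < T) {y rt : ℝ} {p : ℝ × (Fin K → ℝ)} (hp : p ∈ M.feas y) :
    M.stage t rt p.1 p.2 ≤ ∑ i, M.U i (M.dbar i) + M.pim t * rt := by
  obtain ⟨⟨hv, -⟩, hd⟩ := hp
  have hU : ∑ i, M.U i (p.2 i) ≤ ∑ i, M.U i (M.dbar i) := Finset.sum_le_sum fun i _ =>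
    (M.U_strictMono i).monotoneOn (hd i) ⟨(M.dbar_pos i).le, le_rfl⟩ (hd i).2
  have hpay := mul_le_NEMPayment (M.A1 t ht).2.1 (p.1 + ∑ i, p.2 i - rt)
  have hload : 0 ≤ M.pim t * (p.1 + ∑ i, p.2 i) :=
    mul_nonneg (M.pim_nonneg ht) (add_nonneg hv (Finset.sum_nonneg fun i _ => (hd i).1))
  unfold stage
  linarith

theorem stage_monotone (ht : t < T) (v : ℝ) (d : Fin K → ℝ) :
    Monotone fun rt => M.stage t rt v d := fun _ _ hr =>
  sub_le_sub_left (NEMPayment_monotone (M.pim_nonneg ht) (M.A1 t ht).2.1 (by linarith)) _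

theorem stage_sub_stage_le (ht : t < T) {v v' : ℝ} (hvv' : v ≤ v') (rt : ℝ) (d : Fin K → ℝ) :
    M.stage t rt v d - M.stage t rt v' d ≤ M.pip t * (v' - v) := by
  have := NEMPayment_sub_le (M.A1 t ht).2.1
    (show v + ∑ i, d i - rt ≤ v' + ∑ i, d i - rt by linarith)
  unfold stage
  linarith

section Bellman

variable {F : ℝ → ℝ} {B : ℝ}

theorem bellman_objective_le (ht : t < T) (hF : ∀ x, 0 ≤ x → F x ≤ B) {y rt : ℝ}
    {p : ℝ × (Fin K → ℝ)} (hp : p ∈ M.feas y) :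
    M.stage t rt p.1 p.2 + F (y - p.1) ≤ ∑ i, M.U i (M.dbar i) + M.pim t * rt + B :=
  add_le_add (M.stage_le ht hp) (hF _ (sub_nonneg.2 (hp.1.2.trans (min_le_right _ _))))

theorem bellman_le (ht : t < T) (hF : ∀ x, 0 ≤ x → F x ≤ B) {y : ℝ} (hy : 0 ≤ y) (rt : ℝ) :
    M.bellman t F y rt ≤ ∑ i, M.U i (M.dbar i) + M.pim t * rt + B := by
  refine csSup_le ⟨_, _, M.zero_mem_feas hy, rfl⟩ ?_
  rintro _ ⟨p, hp, rfl⟩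
  exact M.bellman_objective_le ht hF hp

theorem le_bellman (ht : t < T) (hF : ∀ x, 0 ≤ x → F x ≤ B) {y rt : ℝ}
    {p : ℝ × (Fin K → ℝ)} (hp : p ∈ M.feas y) :
    M.stage t rt p.1 p.2 + F (y - p.1) ≤ M.bellman t F y rt :=
  le_csSup ⟨_, by rintro _ ⟨q, hq, rfl⟩; exact M.bellman_objective_le ht hF hq⟩ ⟨p, hp, rfl⟩

theorem bellman_monotone (ht : t < T) (hF : ∀ x, 0 ≤ x → F x ≤ B) {y : ℝ} (hy : 0 ≤ y) :
    Monotone (M.bellman t F y) := by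
  intro _ _ hr
  refine csSup_le ⟨_, _, M.zero_mem_feas hy, rfl⟩ ?_
  rintro _ ⟨p, hp, rfl⟩
  exact (add_le_add (M.stage_monotone ht p.1 p.2 hr) le_rfl).trans (M.le_bellman ht hF hp)

theorem integrable_bellman (ht : t < T) (hF : ∀ x, 0 ≤ x → F x ≤ B) {y : ℝ} (hy : 0 ≤ y) :
    Integrable (fun ω => M.bellman t F y (M.r t ω)) M.μ := by
  have := M.prob
  set C := ∑ i, M.U i (M.dbar i) + B
  have hmeas : Measurable fun ω => M.bellman t F y (M.r t ω) :=
    (M.bellman_monotone ht hF hy).measurable.comp (M.r_meas t)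
  refine Integrable.mono' (((integrable_const (|M.bellman t F y 0| + |C|)).add
    ((M.r_int t).const_mul (M.pim t)))) hmeas.aestronglyMeasurable (ae_of_all _ fun ω => ?_)
  have hr := M.r_nonneg t ω
  have hlower := M.bellman_monotone ht hF hy hr
  have hupper := M.bellman_le ht hF hy (M.r t ω)
  have := mul_nonneg (M.pim_nonneg ht) hr
  rw [Real.norm_eq_abs, abs_le]
  constructor <;> simp only [Pi.add_apply] <;>
    linarith [neg_abs_le (M.bellman t F y 0), abs_nonneg (M.bellman t F y 0), le_abs_self C,
      abs_nonneg C]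

theorem bellman_le_of_mem_superdiff (ht : t < T) {τ : ℝ} (hτ : 0 ≤ τ)
    (hF : -M.pip t ∈ superdiff F τ) (rt : ℝ) {z : ℝ} (hz : 0 ≤ z) :
    M.bellman t F z rt ≤ M.bellman t F (τ + M.vbar) rt + -M.pip t * (z - (τ + M.vbar)) := by
  have hbdd := fun x (hx : 0 ≤ x) =>
    le_of_mem_superdiff hF (neg_nonpos.2 (M.pip_nonneg ht)) hx
  refine csSup_le ⟨_, _, M.zero_mem_feas hz, rfl⟩ ?_
  rintro _ ⟨p, ⟨⟨hv, hvmin⟩, hd⟩, rfl⟩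
  have hfull : (M.vbar, p.2) ∈ M.feas (τ + M.vbar) :=
    ⟨⟨M.vbar_pos.le, le_min le_rfl (by linarith)⟩, hd⟩
  have hopt := M.le_bellman ht hbdd hfull (rt := rt)
  have hcharge := M.stage_sub_stage_le ht (hvmin.trans (min_le_left _ _)) rt p.2
  have hcont := hF (z - p.1) (sub_nonneg.2 (hvmin.trans (min_le_right _ _)))
  simp only [add_sub_cancel_right] at hopt
  linarith

end Bellman

theorem neg_pip_mem_h_add_vbar (ht : t < T - 1) {τ : ℝ} (hτ : 0 ≤ τ)
    (hτh : -M.pip t ∈ M.h (t + 1) τ) : -M.pip t ∈ M.h t (τ + M.vbar) := by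
  have := M.prob
  have hT : t < T := by omega
  have hVbar : M.Vbar t = fun y => ∫ ω, M.bellman t (M.Vbar (t + 1)) y (M.r t ω) ∂M.μ :=
    funext fun y => by simp only [Vbar, M.V_eq_bellman ht]
  have hbdd := fun x (hx : 0 ≤ x) => le_of_mem_superdiff hτh (neg_nonpos.2 (M.pip_nonneg hT)) hx
  rw [h, hVbar]
  exact mem_superdiff_integral (by linarith [M.vbar_pos])
    (fun z hz => M.integrable_bellman hT hbdd hz)
    (fun z hz ω => M.bellman_le_of_mem_superdiff hT hτ hτh _ hz)

end EVModel

theorem prop1_offpeak_threshold_recursion_general (K T : ℕ) (Ω : Type) [MeasurableSpace Ω]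
    (M : EVModel K T Ω)
    (t₀ : ℕ)
    (πoffp πoffm : ℝ)
    (hoff₁ : ∀ s < t₀, M.pip s = πoffp ∧ M.pim s = πoffm)
    (t : ℕ) (htoff : t < t₀) (ht : t < T - 1)
    (τ : ℝ) (hτ : τ ∈ Set.Icc 0 (((T - t - 1 : ℕ) : ℝ) * M.vbar))
    (hτh : -πoffp ∈ M.h (t + 1) τ) :
    -πoffp ∈ M.h t (τ + M.vbar) := by
  obtain ⟨hprice, -⟩ := hoff₁ t htoff
  rw [← hprice] at hτh ⊢
  exact M.neg_pip_mem_h_add_vbar ht hτ.1 hτh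

/-- **Proposition 1 (threshold recursion in the initial off-peak period).**
Let `t` lie in the initial off-peak period `T_off,1` of a TOU schedule
(off-peak `{0, …, t₀-1}`, on-peak `{t₀, …, t₁-1}`, final off-peak `{t₁, …, T-1}`),
and let `τ_t ∈ [0, (T - t - 1) v̄]` satisfy `-π_off⁺ ∈ h_{t+1}(τ_t)`.  Then
`-π_off⁺ ∈ h_t(τ_t + v̄)`: the procrastination thresholds obey the backward recursion
`τ_{t-1} = τ_t + v̄` in the initial off-peak period. -/
theorem prop1_offpeak_threshold_recursion (K T : ℕ) (Ω : Type) [MeasurableSpace Ω]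
    (M : EVModel K T Ω)
    (t₀ t₁ : ℕ) (ht₀₁ : t₀ ≤ t₁) (ht₁T : t₁ ≤ T)
    (πoffp πoffm πonp πonm : ℝ)
    (hoff₁ : ∀ s < t₀, M.pip s = πoffp ∧ M.pim s = πoffm)
    (hon : ∀ s, t₀ ≤ s → s < t₁ → M.pip s = πonp ∧ M.pim s = πonm)
    (hoff₂ : ∀ s, t₁ ≤ s → s < T → M.pip s = πoffp ∧ M.pim s = πoffm)
    (hpp : πoffp ≤ πonp) (hpm : πoffm ≤ πonm)
    (t : ℕ) (htoff : t < t₀) (ht : t < T - 1)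
    (τ : ℝ) (hτ : τ ∈ Set.Icc 0 (((T - t - 1 : ℕ) : ℝ) * M.vbar))
    (hτh : -πoffp ∈ M.h (t + 1) τ) :
    -πoffp ∈ M.h t (τ + M.vbar) :=
  prop1_offpeak_threshold_recursion_general K T Ω M t₀ πoffp πoffm hoff₁ t htoff ht τ hτ hτh
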